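/- arXiv:2103.17050 — 3 statements merged into one kernel-verified Lean document; each statement's English description precedes it below -/
import Mathlib

section
/- For every integer n ≥ 4 and every positive divisor c of 4n−8, the rational number (1/24)·( (n+2)·gcd(c,4n−8)²/(4n−8) + gcd(c,2)² − gcd(c,4)²/4 − 2·gcd(c,2n−4)²/(2n−4) − 1 ) is nonnegative, and it equals 0 if and only if c = 1. -/
/-!
Put `m = 2n - 4`, so that `c ∣ 2m`. Then `c = gcd(c, m)` or `c = 2 gcd(c, m)`.
If `c ∣ m`, the terms at `4n - 8` and `2n - 4` combine to `c²/4`, and 24 times the order is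
`(c² - gcd(c,4)²)/4 + (gcd(c,2)² - 1)`, a sum of two nonnegative terms which both vanish only
for `c = 1`. If `c = 2g` with `g = gcd(c, m)`, they combine to `(n+1)/(n-2) · g² > 1`, which
outweighs `gcd(c,4)²/4 - 3 ≤ 1`.
-/

lemma Nat.eq_gcd_or_eq_two_mul_gcd_of_dvd_two_mul {c m : ℕ} (h : c ∣ 2 * m) :
    c = Nat.gcd c m ∨ c = 2 * Nat.gcd c m := by
  obtain ⟨e, he⟩ := Nat.gcd_dvd_left c m
  rcases Nat.eq_zero_or_pos (Nat.gcd c m) with hg | hg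
  · exact Or.inl (by rw [hg, he, hg, zero_mul])
  have hdvd : Nat.gcd c m * e ∣ Nat.gcd c m * Nat.gcd c 2 := by
    rw [← he, mul_comm]
    exact Nat.dvd_gcd_mul_gcd_iff_dvd_mul.mpr h
  have he2 : e ∣ 2 := ((Nat.mul_dvd_mul_iff_left hg).mp hdvd).trans (Nat.gcd_dvd_right c 2)
  rcases (Nat.dvd_prime Nat.prime_two).mp he2 with rfl | rfl
  · exact Or.inl (he.trans (mul_one _))
  · exact Or.inr (he.trans (mul_comm _ _))

lemma Nat.eq_one_of_dvd_four_of_coprime_two {c : ℕ} (h4 : c ∣ 4) (h2 : Nat.Coprime c 2) :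
    c = 1 :=
  h2.eq_one_of_dvd (h2.dvd_of_dvd_mul_left (m := 2) h4)

/-- The order of vanishing of `η_{D_n}` at the cusp `1/c` of `Γ₀(4n - 8)`. -/
def etaDnOrder (n c : ℕ) : ℚ :=
  (1 / 24 : ℚ) *
    (((n : ℚ) + 2) * (Nat.gcd c (4 * n - 8) : ℚ) ^ 2 / (4 * (n : ℚ) - 8)
      + (Nat.gcd c 2 : ℚ) ^ 2
      - (Nat.gcd c 4 : ℚ) ^ 2 / 4
      - 2 * (Nat.gcd c (2 * n - 4) : ℚ) ^ 2 / (2 * (n : ℚ) - 4)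
      - 1)

section etaDnOrder

variable {n c : ℕ}

lemma etaDnOrder_of_dvd (hn : 2 < n) (hc : c ∣ 2 * n - 4) :
    etaDnOrder n c =
      ((c : ℚ) ^ 2 - (Nat.gcd c 4 : ℚ) ^ 2 + 4 * ((Nat.gcd c 2 : ℚ) ^ 2 - 1)) / 96 := by
  have h4 : Nat.gcd c (4 * n - 8) = c :=
    Nat.gcd_eq_left (hc.trans ⟨2, by omega⟩)
  have hn2 : (n : ℚ) - 2 ≠ 0 := sub_ne_zero.mpr (by exact_mod_cast hn.ne')
  rw [etaDnOrder, h4, Nat.gcd_eq_left hc, show 4 * (n : ℚ) - 8 = 4 * ((n : ℚ) - 2) by ring,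
    show 2 * (n : ℚ) - 4 = 2 * ((n : ℚ) - 2) by ring]
  field_simp
  ring

lemma etaDnOrder_of_eq_two_mul_gcd (hn : 2 < n) (hdvd : c ∣ 4 * n - 8)
    (hc : c = 2 * Nat.gcd c (2 * n - 4)) :
    etaDnOrder n c =
      (((n : ℚ) + 1) / ((n : ℚ) - 2) * (Nat.gcd c (2 * n - 4) : ℚ) ^ 2 + 3
        - (Nat.gcd c 4 : ℚ) ^ 2 / 4) / 24 := by
  have h2 : Nat.gcd c 2 = 2 := Nat.gcd_eq_right ⟨_, hc⟩
  have hn2 : (n : ℚ) - 2 ≠ 0 := sub_ne_zero.mpr (by exact_mod_cast hn.ne')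
  rw [etaDnOrder, Nat.gcd_eq_left hdvd, h2]
  nth_rewrite 1 [hc]
  rw [show 4 * (n : ℚ) - 8 = 4 * ((n : ℚ) - 2) by ring,
    show 2 * (n : ℚ) - 4 = 2 * ((n : ℚ) - 2) by ring]
  push_cast
  field_simp
  ring

lemma etaDnOrder_nonneg_of_dvd (hn : 2 < n) (hc : c ∣ 2 * n - 4) (hc0 : 0 < c) :
    0 ≤ etaDnOrder n c := by
  have h4 : (Nat.gcd c 4 : ℚ) ≤ c := by exact_mod_cast Nat.gcd_le_left 4 hc0
  have h2 : (1 : ℚ) ≤ Nat.gcd c 2 := by exact_mod_cast Nat.gcd_pos_of_pos_left 2 hc0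
  rw [etaDnOrder_of_dvd hn hc]
  have : (Nat.gcd c 4 : ℚ) ^ 2 ≤ (c : ℚ) ^ 2 := by gcongr
  have : (1 : ℚ) ≤ (Nat.gcd c 2 : ℚ) ^ 2 := one_le_pow₀ h2
  positivity

lemma etaDnOrder_eq_zero_iff_of_dvd (hn : 2 < n) (hc : c ∣ 2 * n - 4) (hc0 : 0 < c) :
    etaDnOrder n c = 0 ↔ c = 1 := by
  refine ⟨fun h0 => ?_, fun h1 => by subst h1; simp [etaDnOrder_of_dvd hn hc]⟩
  have h4 : (Nat.gcd c 4 : ℚ) ≤ c := by exact_mod_cast Nat.gcd_le_left 4 hc0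
  have h2 : (1 : ℚ) ≤ Nat.gcd c 2 := by exact_mod_cast Nat.gcd_pos_of_pos_left 2 hc0
  rw [etaDnOrder_of_dvd hn hc] at h0
  have hsq4 : (Nat.gcd c 4 : ℚ) ^ 2 ≤ (c : ℚ) ^ 2 := by gcongr
  have hsq2 : (1 : ℚ) ≤ (Nat.gcd c 2 : ℚ) ^ 2 := one_le_pow₀ h2
  have hc4 : Nat.gcd c 4 = c := by
    have : (Nat.gcd c 4 : ℚ) ^ 2 = (c : ℚ) ^ 2 := by linarith
    exact_mod_cast (pow_left_inj₀ (by positivity) (by positivity) two_ne_zero).mp this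
  have hc2 : Nat.gcd c 2 = 1 := by
    have : (Nat.gcd c 2 : ℚ) ^ 2 = 1 := by linarith
    exact_mod_cast (pow_eq_one_iff_of_nonneg (by positivity) two_ne_zero).mp this
  exact Nat.eq_one_of_dvd_four_of_coprime_two (hc4 ▸ Nat.gcd_dvd_right c 4) hc2

lemma etaDnOrder_pos_of_eq_two_mul_gcd (hn : 2 < n) (hdvd : c ∣ 4 * n - 8)
    (hc : c = 2 * Nat.gcd c (2 * n - 4)) :
    0 < etaDnOrder n c := by
  have hn2 : (2 : ℚ) < n := by exact_mod_cast hn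
  have hg : (1 : ℚ) ≤ Nat.gcd c (2 * n - 4) := by
    exact_mod_cast Nat.gcd_pos_of_pos_right c (by omega : 0 < 2 * n - 4)
  have hb : (Nat.gcd c 4 : ℚ) ≤ 4 := by exact_mod_cast Nat.gcd_le_right c four_pos
  have hratio : 1 < ((n : ℚ) + 1) / ((n : ℚ) - 2) := by
    rw [one_lt_div (by linarith)]; linarith
  rw [etaDnOrder_of_eq_two_mul_gcd hn hdvd hc]
  have : 1 < ((n : ℚ) + 1) / ((n : ℚ) - 2) * (Nat.gcd c (2 * n - 4) : ℚ) ^ 2 :=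
    one_lt_mul_of_lt_of_le hratio (one_le_pow₀ hg)
  have : (Nat.gcd c 4 : ℚ) ^ 2 ≤ 16 := by nlinarith
  linarith

end etaDnOrder

theorem eta_product_Dn_order_nonneg_general (n : ℕ) (hn : 4 ≤ n) (c : ℕ)
    (hdvd : c ∣ 4 * n - 8) :
    0 ≤ (1 / 24 : ℚ) *
        (((n : ℚ) + 2) * (Nat.gcd c (4 * n - 8) : ℚ) ^ 2 / (4 * (n : ℚ) - 8)
          + (Nat.gcd c 2 : ℚ) ^ 2
          - (Nat.gcd c 4 : ℚ) ^ 2 / 4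
          - 2 * (Nat.gcd c (2 * n - 4) : ℚ) ^ 2 / (2 * (n : ℚ) - 4)
          - 1) ∧
      ((1 / 24 : ℚ) *
        (((n : ℚ) + 2) * (Nat.gcd c (4 * n - 8) : ℚ) ^ 2 / (4 * (n : ℚ) - 8)
          + (Nat.gcd c 2 : ℚ) ^ 2
          - (Nat.gcd c 4 : ℚ) ^ 2 / 4
          - 2 * (Nat.gcd c (2 * n - 4) : ℚ) ^ 2 / (2 * (n : ℚ) - 4)
          - 1) = 0 ↔ c = 1) := by
  change 0 ≤ etaDnOrder n c ∧ (etaDnOrder n c = 0 ↔ c = 1)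
  have hn2 : 2 < n := by omega
  have hc0 : 0 < c := Nat.pos_of_dvd_of_pos hdvd (by omega)
  have hdvd' : c ∣ 2 * (2 * n - 4) := by rwa [show 2 * (2 * n - 4) = 4 * n - 8 by omega]
  rcases Nat.eq_gcd_or_eq_two_mul_gcd_of_dvd_two_mul hdvd' with hc | hc
  · have hcm : c ∣ 2 * n - 4 := hc ▸ Nat.gcd_dvd_right c (2 * n - 4)
    exact ⟨etaDnOrder_nonneg_of_dvd hn2 hcm hc0, etaDnOrder_eq_zero_iff_of_dvd hn2 hcm hc0⟩
  · have hpos := etaDnOrder_pos_of_eq_two_mul_gcd hn2 hdvd hc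
    exact ⟨hpos.le, iff_of_false hpos.ne' (by omega)⟩

theorem eta_product_Dn_order_nonneg (n : ℕ) (hn : 4 ≤ n) (c : ℕ) (hc : 0 < c)
    (hdvd : c ∣ 4 * n - 8) :
    0 ≤ (1 / 24 : ℚ) *
        (((n : ℚ) + 2) * (Nat.gcd c (4 * n - 8) : ℚ) ^ 2 / (4 * (n : ℚ) - 8)
          + (Nat.gcd c 2 : ℚ) ^ 2
          - (Nat.gcd c 4 : ℚ) ^ 2 / 4
          - 2 * (Nat.gcd c (2 * n - 4) : ℚ) ^ 2 / (2 * (n : ℚ) - 4)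
          - 1) ∧
      ((1 / 24 : ℚ) *
        (((n : ℚ) + 2) * (Nat.gcd c (4 * n - 8) : ℚ) ^ 2 / (4 * (n : ℚ) - 8)
          + (Nat.gcd c 2 : ℚ) ^ 2
          - (Nat.gcd c 4 : ℚ) ^ 2 / 4
          - 2 * (Nat.gcd c (2 * n - 4) : ℚ) ^ 2 / (2 * (n : ℚ) - 4)
          - 1) = 0 ↔ c = 1) :=
  eta_product_Dn_order_nonneg_general n hn c hdvd
end

section
/- For every positive divisor c of 48, the rational number (1/24)·( 9·gcd(c,48)²/48 + gcd(c,2)² − gcd(c,12)²/12 − gcd(c,16)²/16 − gcd(c,24)²/24 − 1 ) is nonnegative, and it equals 0 if and only if c = 1. -/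
/-- `1152 = 24 · 48` times the order of `η_{E_7}` at the cusp `1/c`. -/
def etaE7OrderNumerator (c : ℕ) : ℤ :=
  9 * (Nat.gcd c 48 : ℤ) ^ 2 + 48 * (Nat.gcd c 2 : ℤ) ^ 2 - 4 * (Nat.gcd c 12 : ℤ) ^ 2
    - 3 * (Nat.gcd c 16 : ℤ) ^ 2 - 2 * (Nat.gcd c 24 : ℤ) ^ 2 - 48

theorem etaE7Order_eq_numerator_div (c : ℕ) :
    (1 / 24 : ℚ) *
        (9 * (Nat.gcd c 48 : ℚ) ^ 2 / 48
          + (Nat.gcd c 2 : ℚ) ^ 2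
          - (Nat.gcd c 12 : ℚ) ^ 2 / 12
          - (Nat.gcd c 16 : ℚ) ^ 2 / 16
          - (Nat.gcd c 24 : ℚ) ^ 2 / 24
          - 1) = etaE7OrderNumerator c / 1152 := by
  unfold etaE7OrderNumerator
  push_cast
  ring

theorem etaE7OrderNumerator_nonneg_and_eq_zero_iff :
    ∀ c ∈ Nat.divisors 48, 0 ≤ etaE7OrderNumerator c ∧ (etaE7OrderNumerator c = 0 ↔ c = 1) := by
  decide

theorem eta_product_E7_order_nonneg_general (c : ℕ) (hdvd : c ∣ 48) :
    0 ≤ (1 / 24 : ℚ) *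
        (9 * (Nat.gcd c 48 : ℚ) ^ 2 / 48
          + (Nat.gcd c 2 : ℚ) ^ 2
          - (Nat.gcd c 12 : ℚ) ^ 2 / 12
          - (Nat.gcd c 16 : ℚ) ^ 2 / 16
          - (Nat.gcd c 24 : ℚ) ^ 2 / 24
          - 1) ∧
      ((1 / 24 : ℚ) *
        (9 * (Nat.gcd c 48 : ℚ) ^ 2 / 48
          + (Nat.gcd c 2 : ℚ) ^ 2
          - (Nat.gcd c 12 : ℚ) ^ 2 / 12
          - (Nat.gcd c 16 : ℚ) ^ 2 / 16
          - (Nat.gcd c 24 : ℚ) ^ 2 / 24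
          - 1) = 0 ↔ c = 1) := by
  obtain ⟨hnonneg, hzero⟩ :=
    etaE7OrderNumerator_nonneg_and_eq_zero_iff c (Nat.mem_divisors.mpr ⟨hdvd, by norm_num⟩)
  rw [etaE7Order_eq_numerator_div]
  refine ⟨div_nonneg (by exact_mod_cast hnonneg) (by norm_num), ?_⟩
  rw [div_eq_zero_iff, Int.cast_eq_zero, ← hzero]
  norm_num

theorem eta_product_E7_order_nonneg (c : ℕ) (hc : 0 < c) (hdvd : c ∣ 48) :
    0 ≤ (1 / 24 : ℚ) *
        (9 * (Nat.gcd c 48 : ℚ) ^ 2 / 48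
          + (Nat.gcd c 2 : ℚ) ^ 2
          - (Nat.gcd c 12 : ℚ) ^ 2 / 12
          - (Nat.gcd c 16 : ℚ) ^ 2 / 16
          - (Nat.gcd c 24 : ℚ) ^ 2 / 24
          - 1) ∧
      ((1 / 24 : ℚ) *
        (9 * (Nat.gcd c 48 : ℚ) ^ 2 / 48
          + (Nat.gcd c 2 : ℚ) ^ 2
          - (Nat.gcd c 12 : ℚ) ^ 2 / 12
          - (Nat.gcd c 16 : ℚ) ^ 2 / 16
          - (Nat.gcd c 24 : ℚ) ^ 2 / 24
          - 1) = 0 ↔ c = 1) :=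
  eta_product_E7_order_nonneg_general c hdvd
end

section
/- Let S be a finite set of positive integers, let a : S → ℤ, let N be a positive integer divisible by every element of S, and let L be a positive integer. If for every positive divisor c of N one has ∑_{m ∈ S} gcd(c,m)²·a(m)/m ≥ 0 (in ℚ), then for every positive divisor c of N·L one has ∑_{m ∈ S} gcd(c, L·m)²·a(m)/(L·m) ≥ 0. Moreover, if all the sums in the hypothesis are strictly positive, then all the sums in the conclusion are strictly positive. -/
/-!
Writing `g = gcd(c, L)`, the coprimality of `c / g` and `L / g` gives
`gcd(c, L·m) = g · gcd(c / g, m)`. Hence the order of `f(Lτ)` at the cusp `1/c` is the positive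
multiple `g² / L` of the order of `f` at the cusp `1/(c / g)`, and `c ∣ N·L` forces `c / g ∣ N`.
-/

open scoped BigOperators

namespace Nat

theorem gcd_mul_eq_gcd_mul_gcd_div_gcd (c L m : ℕ) :
    gcd c (L * m) = gcd c L * gcd (c / gcd c L) m := by
  rcases Nat.eq_zero_or_pos (gcd c L) with hg | hg
  · obtain ⟨rfl, rfl⟩ := Nat.gcd_eq_zero_iff.mp hg
    simp
  have hc : gcd c L * (c / gcd c L) = c := Nat.mul_div_cancel' (gcd_dvd_left c L)
  have hL : gcd c L * (L / gcd c L) = L := Nat.mul_div_cancel' (gcd_dvd_right c L)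
  calc gcd c (L * m) = gcd (gcd c L * (c / gcd c L)) (gcd c L * (L / gcd c L * m)) := by
        rw [hc, ← mul_assoc, hL]
    _ = gcd c L * gcd (c / gcd c L) (L / gcd c L * m) := gcd_mul_left _ _ _
    _ = gcd c L * gcd (c / gcd c L) m := by
        rw [(coprime_div_gcd_div_gcd hg).symm.gcd_mul_left_cancel_right]

theorem div_gcd_dvd_of_dvd_mul {c N L : ℕ} (hL : 0 < L) (h : c ∣ N * L) : c / gcd c L ∣ N := by
  have hg : 0 < gcd c L := gcd_pos_of_pos_right c hL
  have hdiv : c / gcd c L ∣ N * (L / gcd c L) := by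
    rw [← Nat.mul_div_assoc N (gcd_dvd_right c L)]
    exact Nat.div_dvd_div (gcd_dvd_left c L) h
  exact (coprime_div_gcd_div_gcd hg).dvd_of_dvd_mul_right hdiv

end Nat

/-- `24` times the order of vanishing of `∏_{m ∈ S} η(mτ)^{a(m)}` at the cusp `1/c`. -/
def etaCuspSum (S : Finset ℕ) (a : ℕ → ℤ) (c : ℕ) : ℚ :=
  ∑ m ∈ S, (Nat.gcd c m : ℚ) ^ 2 * (a m : ℚ) / (m : ℚ)

theorem sum_gcd_mul_rescaled_eq (S : Finset ℕ) (a : ℕ → ℤ) (L c : ℕ) :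
    ∑ m ∈ S, (Nat.gcd c (L * m) : ℚ) ^ 2 * (a m : ℚ) / ((L : ℚ) * (m : ℚ)) =
      (Nat.gcd c L : ℚ) ^ 2 / L * etaCuspSum S a (c / Nat.gcd c L) := by
  rw [etaCuspSum, Finset.mul_sum]
  refine Finset.sum_congr rfl fun m _ => ?_
  rw [Nat.gcd_mul_eq_gcd_mul_gcd_div_gcd]
  push_cast
  ring

theorem exists_rescaled_sum_eq_pos_mul (S : Finset ℕ) (a : ℕ → ℤ) {N L c : ℕ} (hL : 0 < L)
    (hc : 0 < c) (hcNL : c ∣ N * L) :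
    ∃ c' r, 0 < c' ∧ c' ∣ N ∧ 0 < r ∧
      ∑ m ∈ S, (Nat.gcd c (L * m) : ℚ) ^ 2 * (a m : ℚ) / ((L : ℚ) * (m : ℚ)) =
        r * etaCuspSum S a c' := by
  have hg : 0 < Nat.gcd c L := Nat.gcd_pos_of_pos_left L hc
  refine ⟨c / Nat.gcd c L, (Nat.gcd c L : ℚ) ^ 2 / L,
    Nat.div_pos (Nat.le_of_dvd hc (Nat.gcd_dvd_left c L)) hg,
    Nat.div_gcd_dvd_of_dvd_mul hL hcNL, by positivity, sum_gcd_mul_rescaled_eq S a L c⟩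

theorem eta_product_rescaled_level_general (S : Finset ℕ) (a : ℕ → ℤ)
    (N : ℕ) (L : ℕ) (hL : 0 < L) :
    ((∀ c : ℕ, 0 < c → c ∣ N →
        0 ≤ ∑ m ∈ S, (Nat.gcd c m : ℚ) ^ 2 * (a m : ℚ) / (m : ℚ)) →
      ∀ c : ℕ, 0 < c → c ∣ N * L →
        0 ≤ ∑ m ∈ S, (Nat.gcd c (L * m) : ℚ) ^ 2 * (a m : ℚ) / ((L : ℚ) * (m : ℚ))) ∧
    ((∀ c : ℕ, 0 < c → c ∣ N →
        0 < ∑ m ∈ S, (Nat.gcd c m : ℚ) ^ 2 * (a m : ℚ) / (m : ℚ)) →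
      ∀ c : ℕ, 0 < c → c ∣ N * L →
        0 < ∑ m ∈ S, (Nat.gcd c (L * m) : ℚ) ^ 2 * (a m : ℚ) / ((L : ℚ) * (m : ℚ))) := by
  constructor
  · intro hnonneg c hc hcNL
    obtain ⟨c', r, hc', hc'N, hr, hsum⟩ := exists_rescaled_sum_eq_pos_mul S a hL hc hcNL
    exact hsum ▸ mul_nonneg hr.le (hnonneg c' hc' hc'N)
  · intro hpos c hc hcNL
    obtain ⟨c', r, hc', hc'N, hr, hsum⟩ := exists_rescaled_sum_eq_pos_mul S a hL hc hcNL
    exact hsum ▸ mul_pos hr (hpos c' hc' hc'N)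

theorem eta_product_rescaled_level (S : Finset ℕ) (hS : ∀ m ∈ S, 0 < m) (a : ℕ → ℤ)
    (N : ℕ) (hN : 0 < N) (hdvd : ∀ m ∈ S, m ∣ N) (L : ℕ) (hL : 0 < L) :
    ((∀ c : ℕ, 0 < c → c ∣ N →
        0 ≤ ∑ m ∈ S, (Nat.gcd c m : ℚ) ^ 2 * (a m : ℚ) / (m : ℚ)) →
      ∀ c : ℕ, 0 < c → c ∣ N * L →
        0 ≤ ∑ m ∈ S, (Nat.gcd c (L * m) : ℚ) ^ 2 * (a m : ℚ) / ((L : ℚ) * (m : ℚ))) ∧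
    ((∀ c : ℕ, 0 < c → c ∣ N →
        0 < ∑ m ∈ S, (Nat.gcd c m : ℚ) ^ 2 * (a m : ℚ) / (m : ℚ)) →
      ∀ c : ℕ, 0 < c → c ∣ N * L →
        0 < ∑ m ∈ S, (Nat.gcd c (L * m) : ℚ) ^ 2 * (a m : ℚ) / ((L : ℚ) * (m : ℚ))) :=
  eta_product_rescaled_level_general S a N L hL
end
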